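/- Let φ be holomorphic and locally univalent near α with φ(α) = 0, and let F^H(z) = z − 2φ(z)φ'(z)/(2[φ'(z)]² − φ(z)φ''(z)). Then the third derivative of F^H at α equals minus the Schwarzian derivative of φ at α: (F^H)'''(α) = −S(φ)(α). -/

import Mathlib

open Complex ComplexConjugate

/-- The Schwarzian derivative `S(φ) = φ'''/φ' - (3/2)(φ''/φ')²`. -/
noncomputable def schwarzian (φ : ℂ → ℂ) (z : ℂ) : ℂ :=
  deriv (deriv (deriv φ)) z / deriv φ z - (3 / 2) * (deriv (deriv φ) z / deriv φ z) ^ 2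

/-- The generating function of the Halley method. -/
noncomputable def halleyMap (φ : ℂ → ℂ) (z : ℂ) : ℂ :=
  z - 2 * φ z * deriv φ z / (2 * (deriv φ z) ^ 2 - φ z * deriv (deriv φ) z)

/- Auxiliary functions: numerator, denominator of the Halley correction and their derivatives. -/
noncomputable def NN (φ : ℂ → ℂ) (z : ℂ) : ℂ := 2 * φ z * deriv φ z
noncomputable def DD (φ : ℂ → ℂ) (z : ℂ) : ℂ := 2 * (deriv φ z) ^ 2 - φ z * deriv (deriv φ) z
noncomputable def NN1 (φ : ℂ → ℂ) (z : ℂ) : ℂ :=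
  2 * (deriv φ z) ^ 2 + 2 * φ z * deriv (deriv φ) z
noncomputable def DD1 (φ : ℂ → ℂ) (z : ℂ) : ℂ :=
  3 * deriv φ z * deriv (deriv φ) z - φ z * deriv (deriv (deriv φ)) z
noncomputable def NN2 (φ : ℂ → ℂ) (z : ℂ) : ℂ :=
  6 * deriv φ z * deriv (deriv φ) z + 2 * φ z * deriv (deriv (deriv φ)) z
noncomputable def DD2 (φ : ℂ → ℂ) (z : ℂ) : ℂ :=
  3 * (deriv (deriv φ) z) ^ 2 + 2 * deriv φ z * deriv (deriv (deriv φ)) z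
    - φ z * deriv (deriv (deriv (deriv φ))) z
noncomputable def NN3 (φ : ℂ → ℂ) (z : ℂ) : ℂ :=
  6 * (deriv (deriv φ) z) ^ 2 + 8 * deriv φ z * deriv (deriv (deriv φ)) z
    + 2 * φ z * deriv (deriv (deriv (deriv φ))) z
noncomputable def DD3 (φ : ℂ → ℂ) (z : ℂ) : ℂ :=
  8 * deriv (deriv φ) z * deriv (deriv (deriv φ)) z
    + deriv φ z * deriv (deriv (deriv (deriv φ))) z
    - φ z * deriv (deriv (deriv (deriv (deriv φ)))) z

noncomputable def QQ1 (φ : ℂ → ℂ) (z : ℂ) : ℂ :=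
  (NN1 φ z * DD φ z - NN φ z * DD1 φ z) / DD φ z ^ 2

noncomputable def UU1 (φ : ℂ → ℂ) (z : ℂ) : ℂ := NN2 φ z * DD φ z - NN φ z * DD2 φ z

noncomputable def QQ2 (φ : ℂ → ℂ) (z : ℂ) : ℂ :=
  (UU1 φ z * DD φ z ^ 2
      - (NN1 φ z * DD φ z - NN φ z * DD1 φ z) * (2 * DD φ z * DD1 φ z)) / (DD φ z ^ 2) ^ 2

theorem halleyMap_third_deriv (φ : ℂ → ℂ) (U : Set ℂ) (hU : IsOpen U) (α : ℂ) (hα : α ∈ U)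
    (hφ : DifferentiableOn ℂ φ U) (hφ' : ∀ z ∈ U, deriv φ z ≠ 0) (hzero : φ α = 0) :
    deriv (deriv (deriv (halleyMap φ))) α = -schwarzian φ α := by
  have hAφ : AnalyticOnNhd ℂ φ U := hφ.analyticOnNhd hU
  have hA1 : AnalyticOnNhd ℂ (deriv φ) U := hAφ.deriv
  have hA2 : AnalyticOnNhd ℂ (deriv (deriv φ)) U := hA1.deriv
  have hA3 : AnalyticOnNhd ℂ (deriv (deriv (deriv φ))) U := hA2.deriv
  have hA4 : AnalyticOnNhd ℂ (deriv (deriv (deriv (deriv φ)))) U := hA3.deriv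
  have hd0 : ∀ z ∈ U, HasDerivAt φ (deriv φ z) z :=
    fun z hz => (hAφ z hz).differentiableAt.hasDerivAt
  have hd1 : ∀ z ∈ U, HasDerivAt (deriv φ) (deriv (deriv φ) z) z :=
    fun z hz => (hA1 z hz).differentiableAt.hasDerivAt
  have hd2 : ∀ z ∈ U, HasDerivAt (deriv (deriv φ)) (deriv (deriv (deriv φ)) z) z :=
    fun z hz => (hA2 z hz).differentiableAt.hasDerivAt
  have hd3 : ∀ z ∈ U, HasDerivAt (deriv (deriv (deriv φ)))
      (deriv (deriv (deriv (deriv φ))) z) z :=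
    fun z hz => (hA3 z hz).differentiableAt.hasDerivAt
  have hd4 : ∀ z ∈ U, HasDerivAt (deriv (deriv (deriv (deriv φ))))
      (deriv (deriv (deriv (deriv (deriv φ)))) z) z :=
    fun z hz => (hA4 z hz).differentiableAt.hasDerivAt
  have ha : deriv φ α ≠ 0 := hφ' α hα
  have hDa : DD φ α ≠ 0 := by
    simp only [DD, hzero, zero_mul, sub_zero]
    exact mul_ne_zero two_ne_zero (pow_ne_zero 2 ha)
  -- V : open neighbourhood of α where DD ≠ 0
  have hDcont : ContinuousOn (DD φ) U := by
    exact (continuousOn_const.mul (hA1.continuousOn.pow 2)).sub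
      (hAφ.continuousOn.mul hA2.continuousOn)
  set V : Set ℂ := U ∩ DD φ ⁻¹' {0}ᶜ with hVdef
  have hVo : IsOpen V := hDcont.isOpen_inter_preimage hU isOpen_compl_singleton
  have hαV : α ∈ V := ⟨hα, by simpa using hDa⟩
  have hVnhds : V ∈ nhds α := hVo.mem_nhds hαV
  have hVU : ∀ z ∈ V, z ∈ U := fun z hz => hz.1
  have hVne : ∀ z ∈ V, DD φ z ≠ 0 := fun z hz => Set.mem_compl_singleton_iff.mp hz.2
  -- derivatives of the auxiliary functions
  have hNd : ∀ z ∈ U, HasDerivAt (NN φ) (NN1 φ z) z := by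
    intro z hz
    exact (((hd0 z hz).const_mul 2).mul (hd1 z hz)).congr_deriv
      (by simp only [NN1]; ring)
  have hDd : ∀ z ∈ U, HasDerivAt (DD φ) (DD1 φ z) z := by
    intro z hz
    exact ((((hd1 z hz).pow 2).const_mul 2).sub ((hd0 z hz).mul (hd2 z hz))).congr_deriv
      (by simp only [DD1]; push_cast; ring)
  have hN1d : ∀ z ∈ U, HasDerivAt (NN1 φ) (NN2 φ z) z := by
    intro z hz
    exact ((((hd1 z hz).pow 2).const_mul 2).add
      (((hd0 z hz).const_mul 2).mul (hd2 z hz))).congr_deriv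
      (by simp only [NN2]; push_cast; ring)
  have hD1d : ∀ z ∈ U, HasDerivAt (DD1 φ) (DD2 φ z) z := by
    intro z hz
    exact ((((hd1 z hz).const_mul 3).mul (hd2 z hz)).sub
      ((hd0 z hz).mul (hd3 z hz))).congr_deriv
      (by simp only [DD2]; ring)
  have hN2d : ∀ z ∈ U, HasDerivAt (NN2 φ) (NN3 φ z) z := by
    intro z hz
    exact ((((hd1 z hz).const_mul 6).mul (hd2 z hz)).add
      (((hd0 z hz).const_mul 2).mul (hd3 z hz))).congr_deriv
      (by simp only [NN3]; ring)
  have hD2d : HasDerivAt (DD2 φ) (DD3 φ α) α := by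
    exact (((((hd2 α hα).pow 2).const_mul 3).add
      (((hd1 α hα).const_mul 2).mul (hd3 α hα))).sub
      ((hd0 α hα).mul (hd4 α hα))).congr_deriv
      (by simp only [DD3]; push_cast; ring)
  -- first derivative of halleyMap on V
  have hHd : ∀ z ∈ V, HasDerivAt (halleyMap φ) (1 - QQ1 φ z) z := by
    intro z hz
    exact (hasDerivAt_id z).sub (((hNd z hz.1).div (hDd z hz.1) (hVne z hz)))
  -- second derivative
  have hud : ∀ z ∈ U, HasDerivAt (fun y => NN1 φ y * DD φ y - NN φ y * DD1 φ y)
      (UU1 φ z) z := by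
    intro z hz
    exact (((hN1d z hz).mul (hDd z hz)).sub ((hNd z hz).mul (hD1d z hz))).congr_deriv
      (by simp only [UU1]; ring)
  have hQ1d : ∀ z ∈ V, HasDerivAt (QQ1 φ) (QQ2 φ z) z := by
    intro z hz
    exact ((hud z hz.1).div ((hDd z hz.1).pow 2) (pow_ne_zero 2 (hVne z hz))).congr_deriv
      (by simp only [QQ2, Pi.pow_apply]; push_cast; ring)
  have hstepB : ∀ z ∈ V, HasDerivAt (fun y => 1 - QQ1 φ y) (-QQ2 φ z) z :=
    fun z hz => (hQ1d z hz).const_sub 1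
  -- third derivative, at α only
  have hUU1d : HasDerivAt (UU1 φ)
      (NN3 φ α * DD φ α + NN2 φ α * DD1 φ α - (NN1 φ α * DD2 φ α + NN φ α * DD3 φ α)) α :=
    ((hN2d α hα).mul (hDd α hα)).sub ((hNd α hα).mul hD2d)
  have hsq : HasDerivAt (fun y => DD φ y ^ 2) ((2 : ℕ) * DD φ α ^ 1 * DD1 φ α) α :=
    (hDd α hα).pow 2
  have h2dd1 : HasDerivAt (fun y => 2 * DD φ y * DD1 φ y)
      (2 * DD1 φ α * DD1 φ α + 2 * DD φ α * DD2 φ α) α :=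
    ((hDd α hα).const_mul 2).mul (hD1d α hα)
  have hw : HasDerivAt
      (fun y => UU1 φ y * DD φ y ^ 2
        - (NN1 φ y * DD φ y - NN φ y * DD1 φ y) * (2 * DD φ y * DD1 φ y))
      ((NN3 φ α * DD φ α + NN2 φ α * DD1 φ α - (NN1 φ α * DD2 φ α + NN φ α * DD3 φ α))
          * DD φ α ^ 2 + UU1 φ α * ((2 : ℕ) * DD φ α ^ 1 * DD1 φ α)
        - (UU1 φ α * (2 * DD φ α * DD1 φ α)
            + (NN1 φ α * DD φ α - NN φ α * DD1 φ α)
              * (2 * DD1 φ α * DD1 φ α + 2 * DD φ α * DD2 φ α))) α :=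
    (hUU1d.mul hsq).sub ((hud α hα).mul h2dd1)
  have hden4 : HasDerivAt (fun y => (DD φ y ^ 2) ^ 2)
      ((2 : ℕ) * (DD φ α ^ 2) ^ 1 * ((2 : ℕ) * DD φ α ^ 1 * DD1 φ α)) α :=
    hsq.pow 2
  have hQ2d := hw.div hden4 (pow_ne_zero 2 (pow_ne_zero 2 hDa))
  have hstepC : HasDerivAt (fun y => -QQ2 φ y) _ α := hQ2d.neg
  -- assemble
  have E1 : deriv (halleyMap φ) =ᶠ[nhds α] fun z => 1 - QQ1 φ z := by
    filter_upwards [hVnhds] with z hz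
    exact (hHd z hz).deriv
  have E2 : deriv (deriv (halleyMap φ)) =ᶠ[nhds α] fun z => -QQ2 φ z := by
    refine E1.deriv.trans ?_
    filter_upwards [hVnhds] with z hz
    exact (hstepB z hz).deriv
  rw [E2.deriv_eq, hstepC.deriv]
  simp only [NN, DD, NN1, DD1, NN2, DD2, NN3, DD3, UU1, schwarzian, hzero, zero_mul, mul_zero,
    sub_zero, add_zero, zero_add]
  push_cast
  field_simp
  ring
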